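/- For every zone Z and bound functions L, U : X → ℕ∪{−∞}: Extra⁺_{LU}(Z) ⊆ a_{≼LU}(Z). -/

import Mathlib

attribute [local instance] Classical.propDecidable

noncomputable section

namespace TAform

/-! ### Weights `(≼, c)` with `c ∈ ℤ ∪ {∞}` -/

/-- Values in `ℤ ∪ {∞}`: `none` represents `∞`. -/
abbrev OVal := Option ℤ

/-- Addition on `ℤ ∪ {∞}`. -/
def ovAdd : OVal → OVal → OVal
  | some a, some b => some (a + b)
  | _, _ => none

/-- Strict order on `ℤ ∪ {∞}`. -/
def ovLt : OVal → OVal → Prop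
  | some a, some b => a < b
  | some _, none => True
  | none, _ => False

/-- A weight `(≼, c)`: `strict = true` means `≼` is `<`, `strict = false` means `≤`;
`val ∈ ℤ ∪ {∞}`. -/
structure Weight where
  strict : Bool
  val : OVal

/-- The weight `(<, ∞)`. -/
def winf : Weight := ⟨true, none⟩

/-- The weight `(≤, c)`. -/
def wle (c : ℤ) : Weight := ⟨false, some c⟩

/-- The weight `(<, c)`. -/
def wlt (c : ℤ) : Weight := ⟨true, some c⟩

/-- Addition: `(≼₁,c₁)+(≼₂,c₂) = (≼,c₁+c₂)` where `≼` is `<` iff `≼₁` or `≼₂` is `<`. -/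
def Weight.add (a b : Weight) : Weight := ⟨a.strict || b.strict, ovAdd a.val b.val⟩

/-- Order: `(≼₁,c₁) < (≼₂,c₂)` iff `c₁ < c₂`, or `c₁ = c₂`, `≼₁` is `<` and `≼₂` is `≤`. -/
def Weight.lt (a b : Weight) : Prop :=
  ovLt a.val b.val ∨ (a.val = b.val ∧ a.strict = true ∧ b.strict = false)

def Weight.le (a b : Weight) : Prop := Weight.lt a b ∨ a = b

/-- Minus: `−(≼,c) = (≼,−c)`. -/
def Weight.neg (w : Weight) : Weight := ⟨w.strict, Option.map (fun c => -c) w.val⟩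

/-- Floor: `⌊(<,c)⌋ = (≤,c−1)` and `⌊(≤,c)⌋ = (≤,c)`. -/
def Weight.floor (w : Weight) : Weight :=
  ⟨false, if w.strict then Option.map (fun c => c - 1) w.val else w.val⟩

/-- Ceiling (on integer-valued weights): `⌈(≤,c)⌉ = (≤,c)` and `⌈(<,c)⌉ = (<,c+1)`. -/
def Weight.ceil (w : Weight) : Weight :=
  if w.strict then ⟨true, Option.map (fun c => c + 1) w.val⟩ else w

/-- Maximum of two weights. -/
def Weight.max (a b : Weight) : Weight := if Weight.lt a b then b else a

/-- Satisfaction: `d ≼ c` for a real number `d` and a weight `(≼,c)`. -/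
def Weight.sat (w : Weight) (d : ℝ) : Prop :=
  match w.val with
  | none => True
  | some c => if w.strict then d < (c : ℝ) else d ≤ (c : ℝ)

/-! ### Distance graphs and their semantics -/

/-- Vertices: clocks of `X` together with the special vertex `x₀` (represented by `none`). -/
abbrev Vtx (X : Type*) := Option X

/-- A distance graph: a weight for every ordered pair of vertices.  The edge
`a →^{≼ c} b` represents the constraint `v b − v a ≼ c`. -/
abbrev DGraph (X : Type*) := Vtx X → Vtx X → Weight

/-- A clock valuation. -/
abbrev Val (X : Type*) := X → ℝ

/-- The valuation is nonnegative (clock valuations map into `ℝ≥0`). -/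
def Nonneg {X : Type*} (v : Val X) : Prop := ∀ x, 0 ≤ v x

/-- Extension of a valuation to all vertices, sending `x₀` to `0`. -/
def extV {X : Type*} (v : Val X) : Vtx X → ℝ
  | none => 0
  | some x => v x

/-- Semantics of a distance graph: the set of nonnegative clock valuations
(with `x₀ = 0`) satisfying all edge constraints. -/
def sem {X : Type*} (G : DGraph X) : Set (Val X) :=
  { v | Nonneg v ∧ ∀ a b, (G a b).sat (extV v b - extV v a) }

/-- Weight of the path `a :: l ++ [b]` in `G` (sum of the weights of its edges). -/
def pathWeight {X : Type*} (G : DGraph X) : Vtx X → List (Vtx X) → Vtx X → Weight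
  | a, [], b => G a b
  | a, c :: l, b => (G a c).add (pathWeight G c l b)

/-- `G` has only positive cycles: no cycle has weight at most `(<,0)`. -/
def OnlyPositiveCycles {X : Type*} (G : DGraph X) : Prop :=
  ∀ (a : Vtx X) (l : List (Vtx X)), ¬ (pathWeight G a l a).le (wlt 0)

/-- Canonical form: the weight of the edge from `a` to `b` is a lower bound of the
weights of all paths from `a` to `b`. -/
def PathCanonical {X : Type*} (G : DGraph X) : Prop :=
  ∀ (a b : Vtx X) (l : List (Vtx X)), (G a b).le (pathWeight G a l b)

/-- The weight `w` bounds the difference `v b − v a` over all `v ∈ S`. -/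
def Bounds {X : Type*} (S : Set (Val X)) (a b : Vtx X) (w : Weight) : Prop :=
  ∀ v ∈ S, w.sat (extV v b - extV v a)

/-- `G` is the canonical distance graph of the set `S`: it represents `S` and each of
its edge weights is the least weight bounding the corresponding difference over `S`
(equivalently, for sets defined by clock constraints, the lower bound of the weights
of paths between its endpoints). -/
def IsCanonGraph {X : Type*} (G : DGraph X) (S : Set (Val X)) : Prop :=
  sem G = S ∧ ∀ a b w, Bounds S a b w → (G a b).le w

/-- A zone: a set of valuations defined by a conjunction of constraints of the form
`x − y # c` or `x # c`, i.e. the set represented by some distance graph. -/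
def IsZone {X : Type*} (Z : Set (Val X)) : Prop := ∃ G : DGraph X, sem G = Z

/-! ### Regions and closure -/

/-- Region equivalence with respect to the bound function `α`: same integer parts
(or both above the bound), same set of clocks with zero fractional part, and the
same ordering of fractional parts of bounded clocks. -/
def regEq {X : Type*} (α : X → ℕ) (v w : Val X) : Prop :=
  (∀ x, ((α x : ℝ) < v x ∧ (α x : ℝ) < w x) ∨
    (⌊v x⌋ = ⌊w x⌋ ∧ (Int.fract (v x) = 0 ↔ Int.fract (w x) = 0))) ∧
  (∀ x y, v x ≤ (α x : ℝ) → v y ≤ (α y : ℝ) →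
    (Int.fract (v x) ≤ Int.fract (v y) ↔ Int.fract (w x) ≤ Int.fract (w y)))

/-- A region with respect to `α`: an equivalence class of region equivalence
(inside the nonnegative valuations). -/
def IsRegion {X : Type*} (α : X → ℕ) (R : Set (Val X)) : Prop :=
  ∃ v : Val X, Nonneg v ∧ R = { w | Nonneg w ∧ regEq α v w }

/-- Closure abstraction: the union of the regions (w.r.t. `α`) intersecting `S`. -/
def Closure {X : Type*} (α : X → ℕ) (S : Set (Val X)) : Set (Val X) :=
  ⋃₀ { R | IsRegion α R ∧ (R ∩ S).Nonempty }

/-! ### LU-bounds and the `Extra⁺_LU` extrapolation -/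

/-- `w > (≤, l)` where `l ∈ ℕ ∪ {−∞}` (`⊥` is `−∞`). -/
def gtLB (w : Weight) (l : WithBot ℕ) : Prop :=
  ∀ n : ℕ, l = (n : WithBot ℕ) → ovLt (some (n : ℤ)) w.val

/-- `−w > (≤, l)` where `l ∈ ℕ ∪ {−∞}`. -/
def negGtLB (w : Weight) (l : WithBot ℕ) : Prop :=
  ∃ c : ℤ, w.val = some c ∧ ∀ n : ℕ, l = (n : WithBot ℕ) → c < -(n : ℤ)

/-- The weight `(<, −u)` for `u ∈ ℕ ∪ {−∞}` (with `(<,∞)` when `u = −∞`). -/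
def wltNeg (u : WithBot ℕ) : Weight :=
  ⟨true, WithBot.recBotCoe none (fun n => some (-(n : ℤ))) u⟩

/-- The `Extra⁺_{LU}` extrapolation, applied edgewise to a distance graph `G`
(the canonical graph of a zone): `Z⁺_{xy} = (<,∞)` if `Z_{xy} > (≤,L_y)`, or
`−Z_{y0} > (≤,L_y)`, or `−Z_{x0} > (≤,U_x)` and `y ≠ x₀`;
`Z⁺_{x0} = (<,−U_x)` if `−Z_{x0} > (≤,U_x)`; and `Z⁺_{xy} = Z_{xy}` otherwise. -/
def extraLU {X : Type*} (L U : X → WithBot ℕ) (G : DGraph X) : DGraph X := fun a b =>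
  match a, b with
  | some x, some y =>
      if gtLB (G (some x) (some y)) (L y) ∨ negGtLB (G (some y) none) (L y) ∨
          negGtLB (G (some x) none) (U x)
      then winf else G (some x) (some y)
  | none, some y =>
      if gtLB (G none (some y)) (L y) ∨ negGtLB (G (some y) none) (L y)
      then winf else G none (some y)
  | some x, none =>
      if negGtLB (G (some x) none) (U x) then wltNeg (U x) else G (some x) none
  | none, none => G none none

/-! ### LU-preorder and its abstraction -/

/-- `l < r` where `l ∈ ℕ ∪ {−∞}` and `r : ℝ`. -/
def lbLtR (l : WithBot ℕ) (r : ℝ) : Prop := ∀ n : ℕ, l = (n : WithBot ℕ) → (n : ℝ) < r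

/-- The LU-preorder `ν' ≼_{LU} ν`: for each clock `x`, either `ν' x = ν x`,
or `L x < ν' x < ν x`, or `U x < ν x < ν' x`. -/
def LUpre {X : Type*} (L U : X → WithBot ℕ) (ν' ν : Val X) : Prop :=
  ∀ x, ν' x = ν x ∨ (lbLtR (L x) (ν' x) ∧ ν' x < ν x) ∨ (lbLtR (U x) (ν x) ∧ ν x < ν' x)

/-- The abstraction `a_{≼LU}(W) = { ν | ∃ ν' ∈ W, ν' ≼_{LU} ν }` (inside the
nonnegative valuations). -/
def aLU {X : Type*} (L U : X → WithBot ℕ) (W : Set (Val X)) : Set (Val X) :=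
  { ν | Nonneg ν ∧ ∃ ν' ∈ W, LUpre L U ν' ν }

/-! ### Guards, transitions, timed automata -/

/-- Comparison operators `# ∈ {<, ≤, =, ≥, >}`. -/
inductive Cmp | lt | le | eq | ge | gt
deriving DecidableEq

/-- Satisfaction of a comparison by real numbers. -/
def Cmp.sat : Cmp → ℝ → ℝ → Prop
  | .lt, a, b => a < b
  | .le, a, b => a ≤ b
  | .eq, a, b => a = b
  | .ge, a, b => a ≥ b
  | .gt, a, b => a > b

/-- A clock constraint (guard): a conjunction (list) of constraints `x # c`, `c ∈ ℕ`. -/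
abbrev Guard (X : Type*) := List (X × Cmp × ℕ)

/-- `v ⊨ g`: every conjunct of the guard holds. -/
def gsat {X : Type*} (v : Val X) (g : Guard X) : Prop :=
  ∀ p ∈ g, Cmp.sat p.2.1 (v p.1) (p.2.2 : ℝ)

/-- `[R]v`: reset the clocks in `R` to `0`, leaving the others unchanged. -/
def resetVal {X : Type*} (R : Set X) (v : Val X) : Val X := Set.indicator Rᶜ v

/-- One step `ν →^{δ,t} ν'` for a transition with guard `g` and reset set `R`:
`ν + δ ⊨ g` and `ν' = [R](ν + δ)`. -/
def step {X : Type*} (g : Guard X) (R : Set X) (δ : ℝ) (ν ν' : Val X) : Prop :=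
  0 ≤ δ ∧ gsat (fun x => ν x + δ) g ∧ ν' = resetVal R (fun x => ν x + δ)

/-- `Post(S,t)`: all valuations reachable by the transition from valuations in `S`. -/
def Post {X : Type*} (g : Guard X) (R : Set X) (S : Set (Val X)) : Set (Val X) :=
  { ν' | ∃ ν ∈ S, ∃ δ : ℝ, step g R δ ν ν' }

/-- A timed automaton `(Q, q₀, X, T, Acc)`. -/
structure TimedAuto (Q X : Type*) where
  init : Q
  trans : Set (Q × Guard X × Set X × Q)
  acc : Set Q

/-- `(q,ν) →^{δ,t} (q',ν')` for a transition `t = (q,g,R,q')` of the automaton. -/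
def TimedAuto.cstep {Q X : Type*} (A : TimedAuto Q X) (t : Q × Guard X × Set X × Q)
    (δ : ℝ) (c c' : Q × Val X) : Prop :=
  t ∈ A.trans ∧ c.1 = t.1 ∧ c'.1 = t.2.2.2 ∧ step t.2.1 t.2.2.1 δ c.2 c'.2

end TAform

/-!
Let `ν ∈ Extra⁺_{LU}(Z)`. Any `v ∈ Z` in the box around `ν` given by `v x ≤ ν x` unless
`U x < ν x`, and by `v x ≥ ν x` if `ν x ≤ L x`, `v x > L x` otherwise, satisfies `v ≼_{LU} ν`.
The box only adds edges to and from `x₀`, so, `G` being canonical, `Z ∩ box` is a system of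
difference constraints whose cycles all reduce to `x₀ → y → z → x₀` with a box edge, a zone edge
and a box edge; that these are nonnegative is exactly what the side conditions of `Extra⁺_{LU}`
ensure. A system without negative cycles is solved by Fourier–Motzkin elimination. Weights
`(≼, c)` are read as the lower half-lines `{d | d ≼ c}` of `ℝ`, so that their sum and minimum
become the Minkowski sum and intersection of lower sets.
-/

namespace LowerSet

section Zero

variable {α : Type*} [AddCommGroup α] [Preorder α]

@[simp]
theorem mem_zero_iff {x : α} : x ∈ (0 : LowerSet α) ↔ x ≤ 0 := Iff.rfl

theorem zero_le_iff_mem {s : LowerSet α} : 0 ≤ s ↔ (0 : α) ∈ s := Iic_le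

end Zero

variable {α : Type*} [AddCommGroup α] [PartialOrder α] [IsOrderedAddMonoid α]

instance : IsOrderedAddMonoid (LowerSet α) where
  add_le_add_left _ _ h _ := Set.add_subset_add_right h

theorem mem_add_iff {s t : LowerSet α} {x : α} : x ∈ s + t ↔ ∃ a ∈ s, ∃ b ∈ t, a + b = x :=
  Set.mem_add

theorem zero_le_add_add_of_mem {s t u : LowerSet α} {p q : α} (hp : p ∈ s) (hpq : q - p ∈ t)
    (hq : -q ∈ u) : 0 ≤ s + t + u :=
  zero_le_iff_mem.2 <| mem_add_iff.2
    ⟨p + (q - p), mem_add_iff.2 ⟨p, hp, q - p, hpq, rfl⟩, -q, hq, by abel⟩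

end LowerSet

theorem exists_forall_mem_of_inter_nonempty {ι α : Type*} [Finite ι] [LinearOrder α] [Nonempty α]
    {s t : ι → Set α} (hs : ∀ i, IsLowerSet (s i)) (ht : ∀ i, IsUpperSet (t i))
    (h : ∀ i j, (s i ∩ t j).Nonempty) : ∃ r, ∀ i, r ∈ s i ∧ r ∈ t i := by
  cases isEmpty_or_nonempty ι
  · exact ⟨Classical.arbitrary α, fun i => isEmptyElim i⟩
  obtain ⟨i₀, hi₀⟩ := Finite.exists_min fun i => (⟨s i, hs i⟩ : LowerSet α)
  obtain ⟨j₀, hj₀⟩ := Finite.exists_max fun j => (⟨t j, ht j⟩ : UpperSet α)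
  obtain ⟨r, hrs, hrt⟩ := h i₀ j₀
  exact ⟨r, fun i => ⟨hi₀ i hrs, hj₀ i hrt⟩⟩

namespace TAform

section PathSum

variable {V W M : Type*}

def pathSum [Add M] (S : V → V → M) : V → List V → V → M
  | a, [], b => S a b
  | a, c :: l, b => S a c + pathSum S c l b

theorem pathSum_append [AddSemigroup M] (S : V → V → M) (a c b : V) (l₁ l₂ : List V) :
    pathSum S a (l₁ ++ c :: l₂) b = pathSum S a l₁ c + pathSum S c l₂ b := by
  induction l₁ generalizing a with
  | nil => rfl
  | cons d l₁ ih => simp [pathSum, ih, add_assoc]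

theorem pathSum_comp [Add M] (S : W → W → M) (f : V → W) (a : V) (l : List V) (b : V) :
    pathSum (fun a b => S (f a) (f b)) a l b = pathSum S (f a) (l.map f) (f b) := by
  induction l generalizing a with
  | nil => rfl
  | cons c l ih => simp [pathSum, ih]

theorem le_pathSum [AddCommMonoid M] [Preorder M] [IsOrderedAddMonoid M] {S : V → V → M}
    (hS : ∀ a b c, S a c ≤ S a b + S b c) (a : V) (l : List V) (b : V) :
    S a b ≤ pathSum S a l b := by
  induction l generalizing a with
  | nil => exact le_rfl
  | cons c l ih => exact (hS a c b).trans (add_le_add le_rfl (ih c))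

end PathSum

section Potential

variable {α : Type*} [AddCommGroup α] [LinearOrder α] [IsOrderedAddMonoid α]

/-- Fourier–Motzkin elimination of the vertex `none`. -/
def elimNone {W : Type*} (S : Option W → Option W → LowerSet α) (a b : W) : LowerSet α :=
  min (S (some a) (some b)) (S (some a) none + S none (some b))

theorem elimNone_le_left {W : Type*} (S : Option W → Option W → LowerSet α) (a b : W) :
    elimNone S a b ≤ S (some a) (some b) :=
  min_le_left _ _

theorem elimNone_le_right {W : Type*} (S : Option W → Option W → LowerSet α) (a b : W) :
    elimNone S a b ≤ S (some a) none + S none (some b) :=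
  min_le_right _ _

theorem exists_pathSum_le_pathSum_elimNone {W : Type*} (S : Option W → Option W → LowerSet α)
    (a : W) (l : List W) (b : W) :
    ∃ l', pathSum S (some a) l' (some b) ≤ pathSum (elimNone S) a l b := by
  have edge : ∀ a b : W, ∃ l', pathSum S (some a) l' (some b) ≤ elimNone S a b := by
    intro a b
    rcases min_choice (S (some a) (some b)) (S (some a) none + S none (some b)) with h | h
    · exact ⟨[], h.ge⟩
    · exact ⟨[none], h.ge⟩
  induction l generalizing a with
  | nil => exact edge a b
  | cons c l ih =>
    obtain ⟨l₁, h₁⟩ := edge a c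
    obtain ⟨l₂, h₂⟩ := ih c
    exact ⟨l₁ ++ some c :: l₂, by rw [pathSum_append]; exact add_le_add h₁ h₂⟩

theorem exists_potential_option {W : Type*} [Finite W]
    (ih : ∀ S : W → W → LowerSet α, (∀ a l, 0 ≤ pathSum S a l a) →
      ∃ e : W → α, ∀ a b, e b - e a ∈ S a b)
    (S : Option W → Option W → LowerSet α) (hS : ∀ a l, 0 ≤ pathSum S a l a) :
    ∃ e : Option W → α, ∀ a b, e b - e a ∈ S a b := by
  obtain ⟨e, he⟩ := ih (elimNone S) fun a l =>
    let ⟨l', hl'⟩ := exists_pathSum_le_pathSum_elimNone S a l a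
    (hS _ l').trans hl'
  obtain ⟨r, hr⟩ := exists_forall_mem_of_inter_nonempty
    (s := fun a => {r | r - e a ∈ S (some a) none})
    (t := fun b => {r | e b - r ∈ S none (some b)})
    (fun a _ _ hr h => (S (some a) none).lower (sub_le_sub_right hr _) h)
    (fun b _ _ hr h => (S none (some b)).lower (sub_le_sub_left hr _) h)
    fun a b => by
      obtain ⟨p, hp, q, hq, hpq⟩ := LowerSet.mem_add_iff.1 (elimNone_le_right S a b (he a b))
      refine ⟨e a + p, by simpa using hp, ?_⟩
      rwa [Set.mem_ofPred_eq, sub_add_eq_sub_sub, ← hpq, add_sub_cancel_left]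
  refine ⟨fun o => o.elim r e, ?_⟩
  rintro (_ | a) (_ | b)
  · simpa [pathSum] using LowerSet.zero_le_iff_mem.1 (hS none [])
  · exact (hr b).2
  · exact (hr a).1
  · exact elimNone_le_left S a b (he a b)

theorem exists_potential {V : Type*} [Finite V] (S : V → V → LowerSet α)
    (hS : ∀ a l, 0 ≤ pathSum S a l a) : ∃ e : V → α, ∀ a b, e b - e a ∈ S a b := by
  induction V using Finite.induction_empty_option with
  | of_equiv f ih =>
    obtain ⟨e, he⟩ := ih (fun a b => S (f a) (f b)) fun a l => by
      rw [pathSum_comp]; exact hS _ _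
    exact ⟨e ∘ f.symm, fun a b => by simpa using he (f.symm a) (f.symm b)⟩
  | h_empty => exact ⟨PEmpty.elim, fun a => a.elim⟩
  | h_option ih => exact exists_potential_option ih S hS

end Potential

section Closure

variable {α : Type*} [AddCommGroup α] [LinearOrder α] [IsOrderedAddMonoid α] {V : Type*}
  (G : V → V → LowerSet α) (up lo : V → LowerSet α)

def viaLo (a : V) : LowerSet α := ⨅ c, G a c + lo c

def viaUp (b : V) : LowerSet α := ⨅ d, up d + G d b

/-- `G` together with the bounds `up c` on `e c - e o` and `lo c` on `e o - e c`, closed under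
the paths `a → c → o → d → b` through the base vertex `o`. -/
def closeWith (a b : V) : LowerSet α := min (G a b) (viaLo G lo a + viaUp G up b)

variable {G up lo}

theorem exists_viaLo_eq [Finite V] (a : V) : ∃ c, viaLo G lo a = G a c + lo c :=
  have : Nonempty V := ⟨a⟩
  exists_eq_ciInf_of_finite.imp fun _ h => h.symm

theorem exists_viaUp_eq [Finite V] (b : V) : ∃ d, viaUp G up b = up d + G d b :=
  have : Nonempty V := ⟨b⟩
  exists_eq_ciInf_of_finite.imp fun _ h => h.symm

variable [Finite V] (hG : ∀ a b c, G a c ≤ G a b + G b c)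
include hG

theorem viaLo_le_add_viaLo (a b : V) : viaLo G lo a ≤ G a b + viaLo G lo b := by
  obtain ⟨c, hc⟩ := exists_viaLo_eq (G := G) (lo := lo) b
  calc viaLo G lo a ≤ G a c + lo c := iInf_le _ c
    _ ≤ G a b + G b c + lo c := add_le_add (hG a b c) le_rfl
    _ = G a b + viaLo G lo b := by rw [hc, add_assoc]

theorem viaUp_le_viaUp_add (b c : V) : viaUp G up c ≤ viaUp G up b + G b c := by
  obtain ⟨d, hd⟩ := exists_viaUp_eq (G := G) (up := up) b
  calc viaUp G up c ≤ up d + G d c := iInf_le _ d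
    _ ≤ up d + (G d b + G b c) := add_le_add le_rfl (hG d b c)
    _ = viaUp G up b + G b c := by rw [hd, add_assoc]

variable (h : ∀ c d, 0 ≤ up d + G d c + lo c)
include h

theorem zero_le_viaUp_add_viaLo (b : V) : 0 ≤ viaUp G up b + viaLo G lo b := by
  obtain ⟨d, hd⟩ := exists_viaUp_eq (G := G) (up := up) b
  obtain ⟨c, hc⟩ := exists_viaLo_eq (G := G) (lo := lo) b
  calc 0 ≤ up d + G d c + lo c := h c d
    _ ≤ up d + (G d b + G b c) + lo c := add_le_add (add_le_add le_rfl (hG d b c)) le_rfl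
    _ = viaUp G up b + viaLo G lo b := by rw [hd, hc]; abel

theorem closeWith_le_add (a b c : V) :
    closeWith G up lo a c ≤ closeWith G up lo a b + closeWith G up lo b c := by
  have key : closeWith G up lo a c ≤ viaLo G lo a + viaUp G up c := min_le_right _ _
  obtain hab | hab : closeWith G up lo a b = G a b ∨
      closeWith G up lo a b = viaLo G lo a + viaUp G up b := min_choice _ _ <;>
    obtain hbc | hbc : closeWith G up lo b c = G b c ∨
      closeWith G up lo b c = viaLo G lo b + viaUp G up c := min_choice _ _ <;>
    rw [hab, hbc]
  · exact (min_le_left _ _ : closeWith G up lo a c ≤ _).trans (hG a b c)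
  · calc _ ≤ viaLo G lo a + viaUp G up c := key
      _ ≤ G a b + viaLo G lo b + viaUp G up c := add_le_add (viaLo_le_add_viaLo hG a b) le_rfl
      _ = _ := add_assoc _ _ _
  · calc _ ≤ viaLo G lo a + viaUp G up c := key
      _ ≤ viaLo G lo a + (viaUp G up b + G b c) := add_le_add le_rfl (viaUp_le_viaUp_add hG b c)
      _ = _ := (add_assoc _ _ _).symm
  · calc _ ≤ viaLo G lo a + viaUp G up c := key
      _ ≤ viaLo G lo a + (viaUp G up b + viaLo G lo b) + viaUp G up c :=
        add_le_add (le_add_of_nonneg_right (zero_le_viaUp_add_viaLo hG h b)) le_rfl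
      _ = _ := by abel

theorem exists_potential_of_closed (hG0 : ∀ a, G a a = 0) (o : V) (hup : up o ≤ 0)
    (hlo : lo o ≤ 0) :
    ∃ e : V → α, (∀ a b, e b - e a ∈ G a b) ∧ ∀ c, e c - e o ∈ up c ∧ e o - e c ∈ lo c := by
  have hself : ∀ a, 0 ≤ closeWith G up lo a a := fun a =>
    le_min (hG0 a).ge ((zero_le_viaUp_add_viaLo hG h a).trans_eq (add_comm _ _))
  obtain ⟨e, he⟩ := exists_potential (closeWith G up lo) fun a l =>
    (hself a).trans (le_pathSum (closeWith_le_add hG h) a l a)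
  have hlo_o : viaLo G lo o ≤ 0 := (iInf_le _ o).trans (by rw [hG0, zero_add]; exact hlo)
  have hup_o : viaUp G up o ≤ 0 := (iInf_le _ o).trans (by rw [hG0, add_zero]; exact hup)
  refine ⟨e, fun a b => (min_le_left _ _ : closeWith G up lo a b ≤ _) (he a b), fun c => ⟨?_, ?_⟩⟩
  · have : closeWith G up lo o c ≤ up c := calc
      _ ≤ viaLo G lo o + viaUp G up c := min_le_right _ _
      _ ≤ 0 + (up c + G c c) := add_le_add hlo_o (iInf_le _ c)
      _ = up c := by rw [hG0, add_zero, zero_add]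
    exact this (he o c)
  · have : closeWith G up lo c o ≤ lo c := calc
      _ ≤ viaLo G lo c + viaUp G up o := min_le_right _ _
      _ ≤ (G c c + lo c) + 0 := add_le_add (iInf_le _ c) hup_o
      _ = lo c := by rw [hG0, add_zero, zero_add]
    exact this (he c o)

end Closure

namespace Weight

def toLowerSet (w : Weight) : LowerSet ℝ where
  carrier := {d | w.sat d}
  lower' := by
    intro a b hba h
    obtain ⟨_ | _, _ | c⟩ := w <;> simp_all [sat] <;> linarith

@[simp]
theorem mem_toLowerSet {w : Weight} {d : ℝ} : d ∈ w.toLowerSet ↔ w.sat d := Iff.rfl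

theorem exists_sat (w : Weight) : ∃ d, w.sat d := by
  obtain ⟨s, _ | c⟩ := w
  · exact ⟨0, by simp [sat]⟩
  · exact ⟨c - 1, by cases s <;> simp [sat]⟩

theorem sat_add {w w' : Weight} {d d' : ℝ} (h : w.sat d) (h' : w'.sat d') :
    (w.add w').sat (d + d') := by
  obtain ⟨_ | _, _ | c⟩ := w <;> obtain ⟨_ | _, _ | c'⟩ := w' <;>
    simp_all [sat, add, ovAdd] <;> linarith

theorem toLowerSet_add (w w' : Weight) :
    (w.add w').toLowerSet = w.toLowerSet + w'.toLowerSet := by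
  refine SetLike.ext fun d => ?_
  simp only [LowerSet.mem_add_iff, mem_toLowerSet]
  refine ⟨fun h => ?_, fun ⟨a, ha, b, hb, hab⟩ => hab ▸ sat_add ha hb⟩
  obtain ⟨s, _ | c⟩ := w
  · obtain ⟨b, hb⟩ := w'.exists_sat
    exact ⟨d - b, by simp [sat], b, hb, by ring⟩
  obtain ⟨s', _ | c'⟩ := w'
  · obtain ⟨a, ha⟩ := exists_sat ⟨s, some c⟩
    exact ⟨a, ha, d - a, by simp [sat], by ring⟩
  -- split the slack `c + c' - d` evenly between the two summands
  refine ⟨c - (c + c' - d) / 2, ?_, c' - (c + c' - d) / 2, ?_, by ring⟩ <;>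
    cases s <;> cases s' <;> simp_all [sat, add, ovAdd] <;> linarith

theorem toLowerSet_mono {w w' : Weight} (h : w.le w') : w.toLowerSet ≤ w'.toLowerSet := by
  intro d hd
  rcases h with (h | ⟨hv, hs, hs'⟩) | rfl
  · obtain ⟨s, _ | c⟩ := w <;> obtain ⟨s', _ | c'⟩ := w' <;> simp [ovLt] at h
    · simp [mem_toLowerSet, sat]
    · have : (c : ℝ) + 1 ≤ c' := by exact_mod_cast h
      cases s <;> cases s' <;> simp_all [mem_toLowerSet, sat] <;> linarith
  · obtain ⟨s, v⟩ := w
    obtain ⟨s', v'⟩ := w'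
    cases hv
    cases v
    · simp [mem_toLowerSet, sat]
    · simp_all [mem_toLowerSet, sat]
      linarith
  · exact hd

theorem toLowerSet_wle (k : ℤ) : (wle k).toLowerSet = LowerSet.Iic (k : ℝ) := by
  ext d
  simp [mem_toLowerSet, wle, sat]

end Weight

theorem mem_toLowerSet_of_gtLB {w : Weight} {n : ℕ} {d : ℝ} (hw : gtLB w n) (hd : d < n + 1) :
    d ∈ w.toLowerSet := by
  obtain ⟨s, _ | c⟩ := w
  · simp [Weight.mem_toLowerSet, Weight.sat]
  · have : (n : ℝ) + 1 ≤ c := by exact_mod_cast (hw n rfl : (n : ℤ) < c)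
    cases s <;> simp [Weight.mem_toLowerSet, Weight.sat] <;> linarith

theorem le_of_negGtLB {w : Weight} {n : ℕ} {d : ℝ} (hw : negGtLB w n) (hd : d ∈ w.toLowerSet) :
    d ≤ -(n + 1) := by
  obtain ⟨c, hc, hcn⟩ := hw
  have : (c : ℝ) ≤ -(n + 1) := by exact_mod_cast (show c ≤ -(n + 1 : ℤ) by linarith [hcn n rfl])
  obtain ⟨_ | _, v⟩ := w <;> cases hc <;> simp [Weight.mem_toLowerSet, Weight.sat] at hd <;>
    linarith

namespace IsCanonGraph

variable {X : Type*} {G : DGraph X} {S : Set (Val X)}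

theorem toLowerSet_le (hG : IsCanonGraph G S) {a b : Vtx X} {w : Weight} (h : Bounds S a b w) :
    (G a b).toLowerSet ≤ w.toLowerSet :=
  Weight.toLowerSet_mono (hG.2 a b w h)

theorem nonempty (hG : IsCanonGraph G S) : S.Nonempty := by
  by_contra hS
  obtain ⟨d, hd⟩ := (G none none).exists_sat
  have h : d ∈ (wle (⌊d⌋ - 1)).toLowerSet :=
    hG.toLowerSet_le (fun v hv => absurd ⟨v, hv⟩ hS) hd
  rw [Weight.toLowerSet_wle, LowerSet.mem_Iic_iff] at h
  push_cast at h
  linarith [Int.floor_le d]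

theorem toLowerSet_self (hG : IsCanonGraph G S) (a : Vtx X) : (G a a).toLowerSet = 0 := by
  refine le_antisymm ?_ (LowerSet.zero_le_iff_mem.2 ?_)
  · simpa [Weight.toLowerSet_wle] using
      hG.toLowerSet_le (a := a) (b := a) (w := wle 0) fun v _ => by simp [wle, Weight.sat]
  · obtain ⟨u, hu⟩ := hG.nonempty
    rw [← hG.1] at hu
    simpa [Weight.mem_toLowerSet] using hu.2 a a

theorem triangle (hG : IsCanonGraph G S) (a b c : Vtx X) :
    (G a c).toLowerSet ≤ (G a b).toLowerSet + (G b c).toLowerSet := by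
  rw [← Weight.toLowerSet_add]
  refine hG.toLowerSet_le fun v hv => ?_
  rw [← hG.1] at hv
  simpa using Weight.sat_add (hv.2 a b) (hv.2 b c)

theorem mem_of_forall_mem (hG : IsCanonGraph G S) {v : Val X}
    (hv : ∀ a b, extV v b - extV v a ∈ (G a b).toLowerSet) : v ∈ S := by
  have hnonneg : ∀ x, Bounds S (some x) none (wle 0) := fun x u hu => by
    rw [← hG.1] at hu
    simpa [wle, Weight.sat, extV] using hu.1 x
  rw [← hG.1]
  refine ⟨fun x => ?_, hv⟩
  simpa [Weight.toLowerSet_wle, extV] using hG.toLowerSet_le (hnonneg x) (hv (some x) none)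

end IsCanonGraph

theorem extV_sub_extV {X : Type*} (e : Vtx X → ℝ) (a b : Vtx X) :
    extV (fun x => e (some x) - e none) b - extV (fun x => e (some x) - e none) a = e b - e a := by
  cases a <;> cases b <;> simp [extV]

theorem lbLtR_bot (r : ℝ) : lbLtR ⊥ r := fun _ hn => absurd hn WithBot.bot_ne_coe

theorem luPre_component {l u : WithBot ℕ} {a b : ℝ} (hu : lbLtR u b ∨ a ≤ b)
    (hl : if lbLtR l b then lbLtR l a else b ≤ a) :
    a = b ∨ (lbLtR l a ∧ a < b) ∨ (lbLtR u b ∧ b < a) := by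
  rcases lt_trichotomy a b with hab | rfl | hab
  · split_ifs at hl
    · exact Or.inr (Or.inl ⟨hl, hab⟩)
    · exact absurd hl (not_le.2 hab)
  · exact Or.inl rfl
  · exact Or.inr (Or.inr ⟨hu.resolve_right (not_le.2 hab), hab⟩)

def lbLtNeg (l : WithBot ℕ) : LowerSet ℝ :=
  ⟨{d | lbLtR l (-d)}, fun _ _ hba h n hn => (h n hn).trans_le (neg_le_neg hba)⟩

theorem mem_lbLtNeg {l : WithBot ℕ} {d : ℝ} : d ∈ lbLtNeg l ↔ lbLtR l (-d) := Iff.rfl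

section Box

variable {X : Type*} (L U : X → WithBot ℕ) (ν : Val X)

/-- `upBox U ν c` and `loBox L ν c` bound `v c - v x₀` and `v x₀ - v c` for the valuations `v`
that may lie `≼_{LU}`-below `ν` (see `luPre_component`). -/
def upBox : Vtx X → LowerSet ℝ
  | none => 0
  | some x => if lbLtR (U x) (ν x) then ⊤ else LowerSet.Iic (ν x)

def loBox : Vtx X → LowerSet ℝ
  | none => 0
  | some x => if lbLtR (L x) (ν x) then lbLtNeg (L x) else LowerSet.Iic (-ν x)

variable {L U ν}

theorem mem_upBox_some {x : X} {p : ℝ} :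
    p ∈ upBox U ν (some x) ↔ lbLtR (U x) (ν x) ∨ p ≤ ν x := by
  simp only [upBox]
  split_ifs with h <;> simp [h]

theorem neg_mem_loBox_some {x : X} {q : ℝ} :
    -q ∈ loBox L ν (some x) ↔ if lbLtR (L x) (ν x) then lbLtR (L x) q else ν x ≤ q := by
  simp only [loBox]
  split_ifs <;> simp [mem_lbLtNeg]

theorem extV_mem_upBox (d : Vtx X) : extV ν d ∈ upBox U ν d := by
  cases d with
  | none => simp [upBox, extV]
  | some x => exact mem_upBox_some.2 ((em _).imp_right fun _ => le_rfl)

theorem zero_mem_upBox (hν : Nonneg ν) (d : Vtx X) : 0 ∈ upBox U ν d := by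
  cases d with
  | none => simp [upBox]
  | some x => exact mem_upBox_some.2 ((em _).imp_right fun _ => hν x)

theorem neg_extV_mem_loBox (c : Vtx X) : -extV ν c ∈ loBox L ν c := by
  cases c with
  | none => simp [loBox, extV]
  | some y => rw [neg_mem_loBox_some]; split_ifs <;> simp_all [extV]

theorem neg_mem_loBox_of_bot {y : X} (hy : L y = ⊥) (q : ℝ) : -q ∈ loBox L ν (some y) := by
  rw [neg_mem_loBox_some, hy, if_pos (lbLtR_bot _)]
  exact lbLtR_bot q

theorem neg_mem_loBox_of_lt {y : X} {n : ℕ} {q : ℝ} (hy : L y = n) (hq : (n : ℝ) < q) :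
    -q ∈ loBox L ν (some y) := by
  rw [neg_mem_loBox_some, hy]
  split_ifs with h
  · rintro m hm
    obtain rfl := WithBot.coe_inj.1 hm
    exact hq
  · have : ν y ≤ n := not_lt.1 fun h' => h fun m hm => by
      obtain rfl := WithBot.coe_inj.1 hm
      exact h'
    linarith

end Box

section Extra

variable {X : Type*} {L U : X → WithBot ℕ} {G : DGraph X} {ν : Val X}

theorem lbLtR_of_negGtLB (hν : ν ∈ sem (extraLU L U G)) {x : X}
    (h : negGtLB (G (some x) none) (U x)) : lbLtR (U x) (ν x) := by
  intro m hm
  have := hν.2 (some x) none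
  simp only [extraLU, if_pos h] at this
  rw [hm, show wltNeg (m : WithBot ℕ) = ⟨true, some (-(m : ℤ))⟩ from rfl] at this
  simpa [wltNeg, Weight.sat, extV] using this

theorem extraLU_some_right (d : Vtx X) (y : X) :
    extraLU L U G d (some y) = G d (some y) ∨ gtLB (G d (some y)) (L y) ∨
      negGtLB (G (some y) none) (L y) ∨ ∃ x, d = some x ∧ negGtLB (G (some x) none) (U x) := by
  cases d <;> simp only [extraLU] <;> split_ifs <;> aesop

end Extra

section Verification

variable {X : Type*} {L U : X → WithBot ℕ} {G : DGraph X} {S : Set (Val X)} {ν : Val X}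
  {A : LowerSet ℝ} {w : Weight} {y : X}

theorem neg_mem_toLowerSet_of_not_lbLtR (hν : ν ∈ sem (extraLU L U G)) {x : X}
    (hx : ¬ lbLtR (U x) (ν x)) : -ν x ∈ (G (some x) none).toLowerSet := by
  have := hν.2 (some x) none
  simp only [extraLU, if_neg (mt (lbLtR_of_negGtLB hν) hx)] at this
  simpa [extV] using this

theorem zero_le_add_add_loBox_of_bot {p : ℝ} (hp : p ∈ A) (hy : L y = ⊥) :
    0 ≤ A + w.toLowerSet + loBox L ν (some y) := by
  obtain ⟨s, hs⟩ := w.exists_sat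
  exact LowerSet.zero_le_add_add_of_mem (q := p + s) hp (by simpa using hs)
    (neg_mem_loBox_of_bot hy _)

theorem zero_le_add_add_loBox_of_gtLB {n : ℕ} (hA : 0 ∈ A) (hy : L y = n) (hw : gtLB w n) :
    0 ≤ A + w.toLowerSet + loBox L ν (some y) := by
  by_cases hn : (n : ℝ) < ν y
  · exact LowerSet.zero_le_add_add_of_mem (q := n + 1 / 2) hA
      (mem_toLowerSet_of_gtLB hw (by linarith)) (neg_mem_loBox_of_lt hy (by linarith))
  · exact LowerSet.zero_le_add_add_of_mem (q := ν y) hA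
      (mem_toLowerSet_of_gtLB hw (by linarith)) (neg_extV_mem_loBox (some y))

theorem zero_le_add_add_loBox_of_negGtLB {w' : Weight} {n : ℕ} {p : ℝ} (hp : p ∈ A)
    (hy : L y = n) (hpw : -p ∈ w.toLowerSet + w'.toLowerSet) (hw' : negGtLB w' n) :
    0 ≤ A + w.toLowerSet + loBox L ν (some y) := by
  obtain ⟨s, hs, t, ht, hst⟩ := LowerSet.mem_add_iff.1 hpw
  have := le_of_negGtLB hw' ht
  refine LowerSet.zero_le_add_add_of_mem (q := -t) hp ?_ (neg_mem_loBox_of_lt hy (by linarith))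
  rwa [show -t - p = s by linarith]

theorem zero_le_upBox_add_add_loBox (hG : IsCanonGraph G S) (hν : ν ∈ sem (extraLU L U G))
    (c d : Vtx X) : 0 ≤ upBox U ν d + (G d c).toLowerSet + loBox L ν c := by
  by_cases hfree : ∃ x, d = some x ∧ lbLtR (U x) (ν x)
  · obtain ⟨x, rfl, hx⟩ := hfree
    obtain ⟨s, hs⟩ := (G (some x) c).exists_sat
    refine LowerSet.zero_le_add_add_of_mem (p := extV ν c - s) (by simp [upBox, hx]) ?_
      (neg_extV_mem_loBox c)
    simpa using hs
  push Not at hfree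
  have hd0 : -extV ν d ∈ (G d none).toLowerSet := by
    cases d with
    | none => simp [hG.toLowerSet_self, extV]
    | some x => exact neg_mem_toLowerSet_of_not_lbLtR hν (hfree x rfl)
  cases c with
  | none =>
    exact LowerSet.zero_le_add_add_of_mem (q := 0) (extV_mem_upBox d) (by simpa using hd0)
      (by simp [loBox])
  | some y =>
    cases hy : L y with
    | bot => exact zero_le_add_add_loBox_of_bot (extV_mem_upBox d) hy
    | coe n =>
      rcases extraLU_some_right d y with hkeep | hgt | hneg | ⟨x, rfl, hx⟩
      · have := hν.2 d (some y)
        rw [hkeep] at this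
        exact LowerSet.zero_le_add_add_of_mem (extV_mem_upBox d) this (neg_extV_mem_loBox _)
      · exact zero_le_add_add_loBox_of_gtLB (zero_mem_upBox hν.1 d) hy (by rwa [hy] at hgt)
      · exact zero_le_add_add_loBox_of_negGtLB (extV_mem_upBox d) hy
          (hG.triangle d (some y) none hd0) (by rwa [hy] at hneg)
      · exact absurd (lbLtR_of_negGtLB hν hx) (hfree x rfl)

end Verification

theorem stmt11_general {X : Type*} [Fintype X] (L U : X → WithBot ℕ)
    (Z : Set (Val X)) (G : DGraph X) (hG : IsCanonGraph G Z) :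
    sem (extraLU L U G) ⊆ aLU L U Z := by
  intro ν hν
  obtain ⟨e, hGe, hbox⟩ := exists_potential_of_closed (G := fun a b => (G a b).toLowerSet)
    hG.triangle (zero_le_upBox_add_add_loBox hG hν) hG.toLowerSet_self none le_rfl le_rfl
  refine ⟨hν.1, fun x => e (some x) - e none, hG.mem_of_forall_mem fun a b => ?_, fun x => ?_⟩
  · rw [extV_sub_extV]
    exact hGe a b
  · obtain ⟨hup, hlo⟩ := hbox (some x)
    rw [← neg_sub] at hlo
    exact luPre_component (mem_upBox_some.1 hup) (neg_mem_loBox_some.1 hlo)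

/-- For every zone `Z` (with canonical distance graph `G`) and
bound functions `L, U : X → ℕ ∪ {−∞}`: `Extra⁺_{LU}(Z) ⊆ a_{≼LU}(Z)`. -/
theorem stmt11 {X : Type*} [Fintype X] (L U : X → WithBot ℕ)
    (Z : Set (Val X)) (hZ : IsZone Z) (G : DGraph X) (hG : IsCanonGraph G Z) :
    sem (extraLU L U G) ⊆ aLU L U Z :=
  stmt11_general L U Z G hG

end TAform

end
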